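/- Let P be a normal propositional program and ⟨R_i, ⟨IN_i, OUT_i⟩⟩ an ASPeRiX computation for P that converges at step n. Then IN_n is an answer set of P (correctness of ASPeRiX computations). -/

import Mathlib

/-!
The rules fired by the computation, read through the Gelfond–Lifschitz reduct with respect to
`IN n`, derive `IN n` step by step: every fired rule has its positive body in the current `IN`,
and its negative body in `OUT n`, which is disjoint from `IN n`. Conversely `IN n` is closed under
the reduct, since a reduct rule applicable to `IN n` whose original rule had not fired would be a
pending choice, and convergence says there is none.
-/

structure Rule (α : Type) where
  head : α
  pos : Set α
  neg : Set α

variable {α : Type}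

def TP (P : Set (Rule α)) (X : Set α) : Set α :=
  {a | ∃ r ∈ P, r.head = a ∧ r.pos ⊆ X}

def Cn (P : Set (Rule α)) : Set α :=
  ⋂₀ {X | TP P X ⊆ X}

def reduct (P : Set (Rule α)) (X : Set α) : Set (Rule α) :=
  {r' | ∃ r ∈ P, r.neg ∩ X = ∅ ∧ r' = ⟨r.head, r.pos, ∅⟩}

def AnswerSet (P : Set (Rule α)) (X : Set α) : Prop :=
  X = Cn (reduct P X)

def GR (P : Set (Rule α)) (X : Set α) : Set (Rule α) :=
  {r ∈ P | r.pos ⊆ X ∧ r.neg ∩ X = ∅}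

def heads (R : Set (Rule α)) : Set α := Rule.head '' R

def negs (R : Set (Rule α)) : Set α := ⋃ r ∈ R, r.neg

def prefixSet (l : List (Rule α)) (i : ℕ) : Set (Rule α) :=
  {r | ∃ j < i, l[j]? = some r}

def Grounded (R : Set (Rule α)) : Prop :=
  ∃ l : List (Rule α), l.Nodup ∧ (∀ r, r ∈ R ↔ r ∈ l) ∧
    ∀ i (hi : i < l.length), (l.get ⟨i, hi⟩).pos ⊆ heads (prefixSet l i)

def Dpro (P R : Set (Rule α)) (IN OUT : Set α) : Set (Rule α) :=
  {r ∈ P | r ∉ R ∧ r.pos ⊆ IN ∧ r.neg ⊆ OUT}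

def Dcho (P R : Set (Rule α)) (IN : Set α) : Set (Rule α) :=
  {r ∈ P | r ∉ R ∧ r.pos ⊆ IN ∧ r.neg ∩ IN = ∅}

structure AspComp {α : Type} (P : Set (Rule α)) (bot : α) where
  R : ℕ → Set (Rule α)
  IN : ℕ → Set α
  OUT : ℕ → Set α
  init_R : R 0 = ∅
  init_IN : IN 0 = ∅
  init_OUT : OUT 0 = {bot}
  disj : ∀ i, IN i ∩ OUT i = ∅
  revision : ∀ i, 1 ≤ i →
    (∃ r ∈ Dpro P (R (i-1)) (IN (i-1)) (OUT (i-1)),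
        R i = R (i-1) ∪ {r} ∧ IN i = IN (i-1) ∪ {r.head} ∧ OUT i = OUT (i-1)) ∨
    (Dpro P (R (i-1)) (IN (i-1)) (OUT (i-1)) = ∅ ∧
      ∃ r ∈ Dcho P (R (i-1)) (IN (i-1)),
        R i = R (i-1) ∪ {r} ∧ IN i = IN (i-1) ∪ {r.head} ∧
        OUT i = OUT (i-1) ∪ r.neg) ∨
    (R i = R (i-1) ∧ IN i = IN (i-1) ∧ OUT i = OUT (i-1))
  convergence : ∃ i, Dcho P (R i) (IN i) = ∅

theorem Cn_subset_of_TP_subset {P : Set (Rule α)} {X : Set α} (h : TP P X ⊆ X) : Cn P ⊆ X :=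
  Set.sInter_subset_of_mem h

theorem head_mem_Cn {P : Set (Rule α)} {r : Rule α} (hr : r ∈ P) (hpos : r.pos ⊆ Cn P) :
    r.head ∈ Cn P :=
  fun _ hX => hX ⟨r, hr, rfl, hpos.trans (Cn_subset_of_TP_subset hX)⟩

theorem mem_TP_reduct {P : Set (Rule α)} {X Y : Set α} {a : α} :
    a ∈ TP (reduct P X) Y ↔ ∃ r ∈ P, r.neg ∩ X = ∅ ∧ r.head = a ∧ r.pos ⊆ Y := by
  constructor
  · rintro ⟨_, ⟨r, hr, hneg, rfl⟩, hhead, hpos⟩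
    exact ⟨r, hr, hneg, hhead, hpos⟩
  · rintro ⟨r, hr, hneg, hhead, hpos⟩
    exact ⟨⟨r.head, r.pos, ∅⟩, ⟨r, hr, hneg, rfl⟩, hhead, hpos⟩

theorem head_mem_Cn_reduct {P : Set (Rule α)} {X : Set α} {r : Rule α} (hr : r ∈ P)
    (hneg : r.neg ∩ X = ∅) (hpos : r.pos ⊆ Cn (reduct P X)) : r.head ∈ Cn (reduct P X) :=
  head_mem_Cn (r := ⟨r.head, r.pos, ∅⟩) ⟨r, hr, hneg, rfl⟩ hpos

namespace AspComp

variable {P : Set (Rule α)} {bot : α} (C : AspComp P bot)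

theorem revision_succ (i : ℕ) :
    (∃ r ∈ Dpro P (C.R i) (C.IN i) (C.OUT i),
        C.R (i+1) = C.R i ∪ {r} ∧ C.IN (i+1) = C.IN i ∪ {r.head} ∧ C.OUT (i+1) = C.OUT i) ∨
    (Dpro P (C.R i) (C.IN i) (C.OUT i) = ∅ ∧
      ∃ r ∈ Dcho P (C.R i) (C.IN i),
        C.R (i+1) = C.R i ∪ {r} ∧ C.IN (i+1) = C.IN i ∪ {r.head} ∧
        C.OUT (i+1) = C.OUT i ∪ r.neg) ∨
    (C.R (i+1) = C.R i ∧ C.IN (i+1) = C.IN i ∧ C.OUT (i+1) = C.OUT i) :=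
  C.revision (i+1) i.succ_pos

theorem monotone_OUT : Monotone C.OUT := by
  refine monotone_nat_of_le_succ fun i => ?_
  rcases C.revision_succ i with ⟨_, _, _, _, h⟩ | ⟨_, _, _, _, _, h⟩ | ⟨_, _, h⟩
  · exact h.ge
  · exact h ▸ Set.subset_union_left
  · exact h.ge

theorem IN_eq_heads (i : ℕ) : C.IN i = heads (C.R i) := by
  induction i with
  | zero => simp [C.init_IN, C.init_R, heads]
  | succ i ih =>
    rcases C.revision_succ i with
      ⟨r, _, hR, hIN, _⟩ | ⟨_, r, _, hR, hIN, _⟩ | ⟨hR, hIN, _⟩ <;>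
      simp only [hIN, hR, ih, heads, Set.image_union, Set.image_singleton]

theorem IN_succ_subset (i : ℕ) {a : α} (ha : a ∈ C.IN (i+1)) :
    a ∈ C.IN i ∨ ∃ r ∈ P, r.head = a ∧ r.pos ⊆ C.IN i ∧ r.neg ⊆ C.OUT (i+1) := by
  rcases C.revision_succ i with
    ⟨r, ⟨hr, _, hpos, hneg⟩, _, hIN, hOUT⟩ | ⟨_, r, ⟨hr, _, hpos, _⟩, _, hIN, hOUT⟩ |
      ⟨_, hIN, _⟩
  · rw [hIN] at ha
    exact ha.imp_right fun h => ⟨r, hr, h.symm, hpos, hOUT ▸ hneg⟩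
  · rw [hIN] at ha
    exact ha.imp_right fun h => ⟨r, hr, h.symm, hpos, hOUT ▸ Set.subset_union_right⟩
  · exact .inl (hIN ▸ ha)

theorem neg_inter_IN_eq_empty {r : Rule α} {i n : ℕ} (hneg : r.neg ⊆ C.OUT i) (hi : i ≤ n) :
    r.neg ∩ C.IN n = ∅ := by
  rw [← Set.disjoint_iff_inter_eq_empty]
  exact (Set.disjoint_iff_inter_eq_empty.mpr (C.disj n)).symm.mono_left
    (hneg.trans (C.monotone_OUT hi))

theorem IN_subset_Cn_reduct {n i : ℕ} (hi : i ≤ n) : C.IN i ⊆ Cn (reduct P (C.IN n)) := by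
  induction i with
  | zero => simp [C.init_IN]
  | succ i ih =>
    intro a ha
    rcases C.IN_succ_subset i ha with ha | ⟨r, hr, rfl, hpos, hneg⟩
    · exact ih (by omega) ha
    · exact head_mem_Cn_reduct hr (C.neg_inter_IN_eq_empty hneg hi) (hpos.trans (ih (by omega)))

theorem Cn_reduct_subset_IN {n : ℕ} (hn : Dcho P (C.R n) (C.IN n) = ∅) :
    Cn (reduct P (C.IN n)) ⊆ C.IN n := by
  refine Cn_subset_of_TP_subset fun a ha => ?_
  obtain ⟨r, hr, hneg, rfl, hpos⟩ := mem_TP_reduct.mp ha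
  by_cases hrR : r ∈ C.R n
  · exact C.IN_eq_heads n ▸ Set.mem_image_of_mem _ hrR
  · exact (Set.eq_empty_iff_forall_notMem.mp hn r ⟨hr, hrR, hpos, hneg⟩).elim

end AspComp

theorem asperix_correctness (α : Type) (P : Set (Rule α)) (bot : α)
    (C : AspComp P bot) (n : ℕ) (hn : Dcho P (C.R n) (C.IN n) = ∅) :
    AnswerSet P (C.IN n) :=
  (C.IN_subset_Cn_reduct le_rfl).antisymm (C.Cn_reduct_subset_IN hn)
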